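/- Let d be a Hardy type series derivation on K = ℝ((Γ)) and a ∈ K* with a ≇ 1. Then LT(a'/a) = LE(a) · LT(LF(a)'/LF(a)); in particular LM(a'/a) = θ^{(LF(a))} where θ^{(φ)} := LM(φ'/φ), and LC(a'/a) = LE(a) · LC(LF(a)'/LF(a)). -/

import Mathlib

noncomputable section
open Classical

/-! Core: generalized series fields ℝ((Γ)) realized as Hahn series over Γᵒᵈ,
so supports are anti-well-ordered in Γ and the leading monomial is the max of the support. -/

/-- The generalized series field `ℝ((Γ))`. -/
abbrev GSF (Γ : Type*) [AddCommGroup Γ] [LinearOrder Γ] [IsOrderedAddMonoid Γ] : Type _ := HahnSeries Γᵒᵈ ℝ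

variable {Γ : Type*} [AddCommGroup Γ] [LinearOrder Γ] [IsOrderedAddMonoid Γ]

/-- The leading monomial of a series (max of the support; junk value `0` at `0`). -/
def LM (a : GSF Γ) : Γ := OrderDual.ofDual a.order

/-- The leading coefficient. -/
def LC (a : GSF Γ) : ℝ := a.leadingCoeff

/-- The monomial with exponent `γ` (written multiplicatively in the paper). -/
def mon (γ : Γ) : GSF Γ := HahnSeries.single (OrderDual.toDual γ) 1

/-- The leading term `LT(a)`. -/
def LTm (a : GSF Γ) : GSF Γ := LC a • mon (LM a)

/-- The leading monomial, with value `⊥` at `0`. -/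
def LMb (a : GSF Γ) : WithBot Γ := if a = 0 then ⊥ else ↑(LM a)

/-- Positivity in the anti-lexicographic ordering: positive leading coefficient. -/
def Kpos (a : GSF Γ) : Prop := 0 < LC a

/-- The anti-lexicographic (strict) ordering on `ℝ((Γ))`. -/
def Klt (a b : GSF Γ) : Prop := Kpos (b - a)

/-- Dominance relation `a ≼ b`. -/
def Kdom (a b : GSF Γ) : Prop := LMb a ≤ LMb b

/-- Strict dominance `a ≺ b`. -/
def KdomLt (a b : GSF Γ) : Prop := LMb a < LMb b

/-- Asymptotic equivalence `a ≍ b` (equal leading monomials). -/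
def Kasymp (a b : GSF Γ) : Prop := LMb a = LMb b

/-- `a ∼ b` : equal leading terms. -/
def Ksim (a b : GSF Γ) : Prop := a ≠ 0 ∧ b ≠ 0 ∧ LTm a = LTm b

/-- The maximal ideal `K^{≺1}` of the valuation ring: all monomials `≺ 1`. -/
def Kprec1 : Set (GSF Γ) := {x | ∀ τ ∈ x.support, OrderDual.ofDual τ < (0 : Γ)}

/-- The subring `K^{≻1}` of purely infinite series. -/
def Ksucc1 : Set (GSF Γ) := {x | ∀ τ ∈ x.support, (0 : Γ) < OrderDual.ofDual τ}

/-- The logarithm of `1`-units: `l₁(1+ε) = Σ_{n≥1} (-1)^{n-1} εⁿ/n` (junk `0` off `1 + K^{≺1}`). -/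
def l1 (x : GSF Γ) : GSF Γ :=
  if h : 0 < (x - 1).orderTop then
    (HahnSeries.SummableFamily.mk
      (fun n : ℕ => ((-1 : ℝ) ^ n / (n + 1)) • (x - 1) ^ (n + 1))
      (by
        refine Set.IsPWO.mono (HahnSeries.SummableFamily.isPWO_iUnion_support_powers
          (HahnSeries.zero_le_orderTop_iff.mp (le_of_lt h))) ?_
        intro g hg
        simp only [Set.mem_iUnion] at hg ⊢
        obtain ⟨n, hn⟩ := hg
        exact ⟨n + 1, Function.support_const_smul_subset _ _ hn⟩)
      (by
        intro g
        refine ((HahnSeries.SummableFamily.pow_finite_co_support h g).preimage_embedding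
          ⟨Nat.succ, Nat.succ_injective⟩).subset fun n hn => ?_
        simp only [Set.mem_preimage, Function.mem_support, Function.Embedding.coeFn_mk,
          Set.mem_setOf_eq] at hn ⊢
        exact fun hc => hn (by rw [HahnSeries.coeff_smul, hc, smul_zero]))).hsum
  else 0

/-! Second core layer: Γ as a subgroup of the Hahn group H(Φ), series derivations,
Hardy type derivations, series morphisms and pre-logarithms. -/

/-- A realization of the ordered abelian group `Γ` as a subgroup of the Hahn group
`H(Φ)` over the chain `Φ` of fundamental monomials (written additively): each `γ ∈ Γ`
is a formal product `∏ φ^{γ_φ}` with real exponents `expo γ φ` and anti-well-ordered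
support; `fm φ` is the fundamental monomial `φ` itself viewed in `Γ`; `LF` is the
leading fundamental monomial (max of the support, junk at `0`); the ordering of `Γ`
is the anti-lexicographic one. -/
structure HahnEmb (Φ Γ : Type*) [LinearOrder Φ] [AddCommGroup Γ] [LinearOrder Γ] [IsOrderedAddMonoid Γ] where
  expo : Γ → Φ → ℝ
  expo_add : ∀ α β φ, expo (α + β) φ = expo α φ + expo β φ
  expo_inj : ∀ α β, (∀ φ, expo α φ = expo β φ) → α = β
  supp_awo : ∀ α : Γ, (Function.support (expo α)).WellFoundedOn ((· > ·) : Φ → Φ → Prop)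
  fm : Φ → Γ
  expo_fm : ∀ φ ψ, expo (fm φ) ψ = if ψ = φ then 1 else 0
  LF : Γ → Φ
  LF_mem : ∀ α, α ≠ 0 → expo α (LF α) ≠ 0
  LF_max : ∀ α φ, expo α φ ≠ 0 → φ ≤ LF α
  pos_iff : ∀ α : Γ, 0 < α ↔ (α ≠ 0 ∧ 0 < expo α (LF α))

variable {Φ : Type*} [LinearOrder Φ]

/-- The support `supp γ ⊆ Φ` of a generalized monomial. -/
def HahnEmb.supp (E : HahnEmb Φ Γ) (γ : Γ) : Set Φ := Function.support (E.expo γ)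

/-- The leading exponent `LE(γ)`. -/
def HahnEmb.LE (E : HahnEmb Φ Γ) (γ : Γ) : ℝ := E.expo γ (E.LF γ)

/-- The logarithmic derivative `φ'/φ` of a fundamental monomial. -/
def logD (E : HahnEmb Φ Γ) (d : GSF Γ → GSF Γ) (φ : Φ) : GSF Γ :=
  d (mon (E.fm φ)) / mon (E.fm φ)

/-- `θ^{(φ)} = LM(φ'/φ)`. -/
def theta (E : HahnEmb Φ Γ) (d : GSF Γ → GSF Γ) (φ : Φ) : Γ := LM (logD E d φ)

/-- A series derivation: `1' = 0`, the strong Leibniz rule (D1) and strong linearity (D2),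
expressed coefficientwise (finitely many contributions to each coefficient, whose sum is
the coefficient of the derivative). -/
structure IsSeriesDerivation (E : HahnEmb Φ Γ) (d : GSF Γ → GSF Γ) : Prop where
  deriv_one : d 1 = 0
  leibniz_fin : ∀ (γ : Γ) (τ : Γᵒᵈ),
      {φ : Φ | E.expo γ φ * (logD E d φ).coeff τ ≠ 0}.Finite
  leibniz : ∀ (γ : Γ) (τ : Γᵒᵈ),
      (d (mon γ)).coeff (OrderDual.toDual (γ + OrderDual.ofDual τ))
        = ∑ᶠ φ : Φ, E.expo γ φ * (logD E d φ).coeff τ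
  linear_fin : ∀ (a : GSF Γ) (τ : Γᵒᵈ),
      {γ : Γᵒᵈ | a.coeff γ * (d (HahnSeries.single γ 1)).coeff τ ≠ 0}.Finite
  linear : ∀ (a : GSF Γ) (τ : Γᵒᵈ),
      (d a).coeff τ = ∑ᶠ γ : Γᵒᵈ, a.coeff γ * (d (HahnSeries.single γ 1)).coeff τ

/-- A Hardy type derivation: (HD1) the constants are `ℝ`, (HD2) l'Hospital's rule,
(HD3) compatibility of the logarithmic derivative with the dominance relation,
with `≍` exactly for comparable elements. -/
structure IsHardy (E : HahnEmb Φ Γ) (d : GSF Γ → GSF Γ) : Prop where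
  constants : ∀ a : GSF Γ, d a = 0 ↔ ∃ r : ℝ, a = (r : ℝ) • (1 : GSF Γ)
  hospital : ∀ a b : GSF Γ, a ≠ 0 → b ≠ 0 → ¬ Kasymp a 1 → ¬ Kasymp b 1 →
      (Kdom a b ↔ Kdom (d a) (d b))
  logcomp : ∀ a b : GSF Γ, a ≠ 0 → b ≠ 0 → |LM b| < |LM a| → 0 < |LM b| →
      Kdom (d b / b) (d a / a) ∧
      (Kasymp (d a / a) (d b / b) ↔ E.LF (LM a) = E.LF (LM b))

/-- A series morphism `l : Γ → K`, i.e. axiom (L): `l(∏ φ^{α_φ}) = Σ α_φ l(φ)`,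
expressed coefficientwise via the summability of the families involved. -/
structure IsSeriesMorphism (E : HahnEmb Φ Γ) (l : Γ → GSF Γ) : Prop where
  fin : ∀ (α : Γ) (τ : Γᵒᵈ), {φ : Φ | E.expo α φ * (l (E.fm φ)).coeff τ ≠ 0}.Finite
  eq : ∀ (α : Γ) (τ : Γᵒᵈ), (l α).coeff τ = ∑ᶠ φ : Φ, E.expo α φ * (l (E.fm φ)).coeff τ

/-- The pre-logarithm on `K_{>0}` induced by a pre-logarithmic section `l` on `Γ`:
`l(a) = log(LC a) + l(LM a) + l₁(1 + ε_a)` where `a = LT(a)(1+ε_a)`. -/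
def prelogOf (l : Γ → GSF Γ) (a : GSF Γ) : GSF Γ :=
  Real.log (LC a) • (1 : GSF Γ) + l (LM a) + l1 (a / LTm a)

/-- `l` is a pre-logarithmic section: a series morphism into `K^{≻1}` which is an
embedding of ordered groups. -/
structure IsPrelogSection (E : HahnEmb Φ Γ) (l : Γ → GSF Γ) : Prop where
  morphism : IsSeriesMorphism E l
  purely_infinite : ∀ α : Γ, l α ∈ Ksucc1
  order_preserving : ∀ α β : Γ, α < β → Klt (l α) (l β)

/-- Compatibility of the induced pre-logarithm with the derivation:
`l(a)' = a'/a` for all `a > 0`. -/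
def LogCompatible (d : GSF Γ → GSF Γ) (l : Γ → GSF Γ) : Prop :=
  ∀ a : GSF Γ, Kpos a → d (prelogOf l a) = d a / a

/-- The Growth Axiom (GA): `l(α) ≺ α` for all monomials `α ≻ 1`. -/
def GrowthAxiom (l : Γ → GSF Γ) : Prop :=
  ∀ α : Γ, 0 < α → KdomLt (l α) (mon α)

/-! By the strong Leibniz rule, the coefficient of `d(mon β)` at `β + τ` is
`Σ_φ β_φ · (φ'/φ)_τ`. Axiom (HD3) makes `θ` strictly increasing along `Φ`, so for
`τ ≥ θ^{(LF β)}` only `φ = LF β` contributes, and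
`LT(d(mon β)) = LE(β) · mon β · LT(LF(β)'/LF(β))`.
By l'Hospital's rule `d(mon β') ≺ d(mon β)` whenever `β' < β`, so by strong linearity the
leading term of `a'` is `LC(a) · LT(d(mon (LM a)))`; dividing by `LT(a)` gives the claim. -/

open OrderDual

section Series

lemma mon_ne_zero (γ : Γ) : mon γ ≠ 0 := HahnSeries.single_ne_zero one_ne_zero

lemma mon_zero : mon (0 : Γ) = 1 := HahnSeries.single_zero_one

lemma LM_mon (γ : Γ) : LM (mon γ) = γ := by
  simp [LM, mon]

lemma LMb_of_ne_zero {a : GSF Γ} (h : a ≠ 0) : LMb a = LM a := if_neg h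

lemma LMb_zero : LMb (0 : GSF Γ) = ⊥ := if_pos rfl

lemma LMb_mon (γ : Γ) : LMb (mon γ) = γ := by
  rw [LMb_of_ne_zero (mon_ne_zero γ), LM_mon]

lemma kasymp_one_iff {a : GSF Γ} (ha : a ≠ 0) : Kasymp a 1 ↔ LM a = 0 := by
  rw [Kasymp, LMb_of_ne_zero ha, LMb_of_ne_zero one_ne_zero, WithBot.coe_inj]
  simp [LM]

lemma LC_ne_zero {a : GSF Γ} (h : a ≠ 0) : LC a ≠ 0 := HahnSeries.leadingCoeff_ne_zero.2 h

lemma coeff_LM (a : GSF Γ) : a.coeff (toDual (LM a)) = LC a :=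
  HahnSeries.leadingCoeff_eq.symm

lemma le_LM_of_coeff_ne_zero {a : GSF Γ} {τ : Γ} (h : a.coeff (toDual τ) ≠ 0) : τ ≤ LM a :=
  HahnSeries.order_le_of_coeff_ne_zero h

lemma coeff_eq_zero_of_LM_lt {a : GSF Γ} {τ : Γ} (h : LM a < τ) : a.coeff (toDual τ) = 0 :=
  by_contra fun hc => h.not_ge (le_LM_of_coeff_ne_zero hc)

lemma coeff_eq_zero_of_LMb_lt {x y : GSF Γ} (hy : y ≠ 0) (h : LMb x < LMb y) {τ : Γ}
    (hτ : LM y ≤ τ) : x.coeff (toDual τ) = 0 := by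
  by_cases hx : x = 0
  · simp [hx]
  rw [LMb_of_ne_zero hx, LMb_of_ne_zero hy, WithBot.coe_lt_coe] at h
  exact coeff_eq_zero_of_LM_lt (h.trans_le hτ)

lemma LM_LC_of_coeff_add_eq {a b : GSF Γ} {β : Γ} {c : ℝ} (hb : b ≠ 0) (hc : c ≠ 0)
    (h : ∀ τ, LM b ≤ τ → a.coeff (toDual (β + τ)) = c * b.coeff (toDual τ)) :
    LM a = β + LM b ∧ LC a = c * LC b := by
  have htop : a.coeff (toDual (β + LM b)) = c * LC b := by rw [h _ le_rfl, coeff_LM]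
  have htop_ne : a.coeff (toDual (β + LM b)) ≠ 0 := htop ▸ mul_ne_zero hc (LC_ne_zero hb)
  have hLM : LM a = β + LM b := by
    refine le_antisymm (not_lt.1 fun hlt => ?_) (le_LM_of_coeff_ne_zero htop_ne)
    have hshift := h (LM a - β) (le_sub_iff_add_le'.2 hlt.le)
    rw [add_sub_cancel, coeff_LM, coeff_eq_zero_of_LM_lt (lt_sub_iff_add_lt'.2 hlt),
      mul_zero] at hshift
    exact LC_ne_zero (HahnSeries.ne_zero_of_coeff_ne_zero htop_ne) hshift
  exact ⟨hLM, by rw [← coeff_LM, hLM, htop]⟩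

lemma LM_mul {x y : GSF Γ} (hx : x ≠ 0) (hy : y ≠ 0) : LM (x * y) = LM x + LM y := by
  simp [LM, HahnSeries.order_mul hx hy]

lemma LM_div {x y : GSF Γ} (hx : x ≠ 0) (hy : y ≠ 0) : LM (x / y) = LM x - LM y := by
  rw [eq_sub_iff_add_eq, ← LM_mul (div_ne_zero hx hy) hy, div_mul_cancel₀ x hy]

lemma LC_div {x y : GSF Γ} (hy : y ≠ 0) : LC (x / y) = LC x / LC y := by
  rw [eq_div_iff (LC_ne_zero hy), LC, LC, LC, ← HahnSeries.leadingCoeff_mul,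
    div_mul_cancel₀ x hy]

end Series

namespace HahnEmb

variable (E : HahnEmb Φ Γ)

lemma expo_zero (φ : Φ) : E.expo 0 φ = 0 := by
  have h := E.expo_add 0 0 φ
  rw [add_zero] at h
  linarith

lemma expo_sub (α β : Γ) (φ : Φ) : E.expo (α - β) φ = E.expo α φ - E.expo β φ := by
  have h := E.expo_add (α - β) β φ
  rw [sub_add_cancel] at h
  linarith

variable {E}

lemma LF_eq_of {α : Γ} {ψ : Φ} (hψ : E.expo α ψ ≠ 0)
    (hgt : ∀ χ, ψ < χ → E.expo α χ = 0) : E.LF α = ψ := by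
  have hα : α ≠ 0 := by
    rintro rfl
    exact hψ (E.expo_zero ψ)
  exact le_antisymm (not_lt.1 fun h => E.LF_mem α hα (hgt _ h)) (E.LF_max α ψ hψ)

variable (E) in
lemma pos_of_expo {α : Γ} {ψ : Φ} (hψ : 0 < E.expo α ψ)
    (hgt : ∀ χ, ψ < χ → E.expo α χ = 0) : 0 < α := by
  refine (E.pos_iff α).2 ⟨?_, by rwa [LF_eq_of hψ.ne' hgt]⟩
  rintro rfl
  exact hψ.ne' (E.expo_zero ψ)

variable (E)

lemma LF_fm (φ : Φ) : E.LF (E.fm φ) = φ := by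
  refine LF_eq_of ?_ fun _ h => ?_
  · simp [E.expo_fm]
  · simp [E.expo_fm, h.ne']

lemma fm_pos (φ : Φ) : 0 < E.fm φ := by
  refine E.pos_of_expo (ψ := φ) ?_ fun _ h => ?_
  · simp [E.expo_fm]
  · simp [E.expo_fm, h.ne']

lemma fm_ne_zero (φ : Φ) : E.fm φ ≠ 0 := (E.fm_pos φ).ne'

lemma fm_strictMono : StrictMono E.fm := by
  intro φ ψ h
  refine sub_pos.1 (E.pos_of_expo (ψ := ψ) ?_ fun _ hχ => ?_)
  · simp [E.expo_sub, E.expo_fm, h.ne']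
  · simp [E.expo_sub, E.expo_fm, hχ.ne', (h.trans hχ).ne']

end HahnEmb

variable {E : HahnEmb Φ Γ} {d : GSF Γ → GSF Γ}

namespace IsHardy

variable (hhardy : IsHardy E d)
include hhardy

lemma d_mon_ne_zero {β : Γ} (hβ : β ≠ 0) : d (mon β) ≠ 0 := by
  intro h
  obtain ⟨r, hr⟩ := (hhardy.constants _).1 h
  have hcoeff := congrArg (fun x : GSF Γ => x.coeff (toDual β)) hr
  simp [mon, HahnSeries.coeff_one, hβ] at hcoeff

lemma logD_ne_zero (φ : Φ) : logD E d φ ≠ 0 :=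
  div_ne_zero (hhardy.d_mon_ne_zero (E.fm_ne_zero φ)) (mon_ne_zero _)

lemma theta_strictMono : StrictMono (theta E d) := by
  intro φ ψ h
  have hφ := E.fm_pos φ
  obtain ⟨hdom, hiff⟩ := hhardy.logcomp (mon (E.fm ψ)) (mon (E.fm φ)) (mon_ne_zero _)
    (mon_ne_zero _)
    (by simpa [LM_mon, abs_of_pos hφ, abs_of_pos (E.fm_pos ψ)] using E.fm_strictMono h)
    (by simpa [LM_mon, abs_of_pos hφ] using hφ)
  have hne : ¬ Kasymp (logD E d ψ) (logD E d φ) := by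
    rw [logD, logD, hiff, LM_mon, LM_mon, E.LF_fm, E.LF_fm]
    exact h.ne'
  have hlt : LMb (logD E d φ) < LMb (logD E d ψ) := lt_of_le_of_ne hdom fun hc => hne hc.symm
  rwa [LMb_of_ne_zero (hhardy.logD_ne_zero φ), LMb_of_ne_zero (hhardy.logD_ne_zero ψ),
    WithBot.coe_lt_coe] at hlt

set_option synthInstance.maxHeartbeats 100000 in
lemma LMb_d_mon_lt {β' β : Γ} (hβ : β ≠ 0) (h : β' < β) :
    LMb (d (mon β')) < LMb (d (mon β)) := by
  by_cases hβ' : β' = 0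
  · have hd_one : d 1 = 0 := (hhardy.constants 1).2 ⟨1, (one_smul ℝ _).symm⟩
    rw [hβ', mon_zero, hd_one, LMb_zero, LMb_of_ne_zero (hhardy.d_mon_ne_zero hβ)]
    exact WithBot.bot_lt_coe _
  have hiff := hhardy.hospital (mon β) (mon β') (mon_ne_zero _) (mon_ne_zero _)
    (by rwa [kasymp_one_iff (mon_ne_zero _), LM_mon])
    (by rwa [kasymp_one_iff (mon_ne_zero _), LM_mon])
  have hnot : ¬ Kdom (mon β) (mon β') := by
    rw [Kdom, LMb_mon, LMb_mon, WithBot.coe_le_coe, not_le]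
    exact h
  exact not_le.1 (mt hiff.2 hnot)

end IsHardy

namespace IsSeriesDerivation

variable (hder : IsSeriesDerivation E d) (hhardy : IsHardy E d)
include hder hhardy

lemma coeff_d_mon_add (β : Γ) {τ : Γ} (hτ : theta E d (E.LF β) ≤ τ) :
    (d (mon β)).coeff (toDual (β + τ)) = E.LE β * (logD E d (E.LF β)).coeff (toDual τ) := by
  have h := hder.leibniz β (toDual τ)
  rw [ofDual_toDual] at h
  rw [h, finsum_eq_single _ (E.LF β)]
  · rfl
  intro φ hφ
  by_cases hφ0 : E.expo β φ = 0
  · rw [hφ0, zero_mul]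
  have hlt : φ < E.LF β := lt_of_le_of_ne (E.LF_max β φ hφ0) hφ
  rw [coeff_eq_zero_of_LM_lt ((hhardy.theta_strictMono hlt).trans_le hτ), mul_zero]

lemma LM_LC_d_mon {β : Γ} (hβ : β ≠ 0) :
    LM (d (mon β)) = β + theta E d (E.LF β) ∧
      LC (d (mon β)) = E.LE β * LC (logD E d (E.LF β)) :=
  LM_LC_of_coeff_add_eq (hhardy.logD_ne_zero _) (E.LF_mem β hβ) fun _ hτ =>
    hder.coeff_d_mon_add hhardy β hτ

lemma coeff_d_eq_of_LM_d_mon_le {a : GSF Γ} (hγ : LM a ≠ 0) {τ : Γ}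
    (hτ : LM (d (mon (LM a))) ≤ τ) :
    (d a).coeff (toDual τ) = LC a * (d (mon (LM a))).coeff (toDual τ) := by
  rw [hder.linear, finsum_eq_single _ (toDual (LM a)), coeff_LM]
  · rfl
  intro g hg
  by_cases hc : a.coeff g = 0
  · rw [hc, zero_mul]
  have hlt : ofDual g < LM a :=
    lt_of_le_of_ne (le_LM_of_coeff_ne_zero hc) fun h => hg (congrArg toDual h)
  change a.coeff g * (d (mon (ofDual g))).coeff (toDual τ) = 0
  rw [coeff_eq_zero_of_LMb_lt (hhardy.d_mon_ne_zero hγ) (hhardy.LMb_d_mon_lt hγ hlt) hτ,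
    mul_zero]

lemma LM_LC_d {a : GSF Γ} (ha : a ≠ 0) (hγ : LM a ≠ 0) :
    LM (d a) = LM a + theta E d (E.LF (LM a)) ∧
      LC (d a) = LC a * (E.LE (LM a) * LC (logD E d (E.LF (LM a)))) := by
  obtain ⟨hLM, hLC⟩ := hder.LM_LC_d_mon hhardy hγ
  have h := LM_LC_of_coeff_add_eq (β := 0) (hhardy.d_mon_ne_zero hγ) (LC_ne_zero ha)
    fun τ hτ => by rw [zero_add]; exact hder.coeff_d_eq_of_LM_d_mon_le hhardy hγ hτ
  rwa [zero_add, hLM, hLC] at h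

end IsSeriesDerivation

set_option synthInstance.maxHeartbeats 100000 in
/-- For a Hardy type series derivation and `a ∈ K*` with `a ≇ 1`:
`LT(a'/a) = LE(a)·LT(LF(a)'/LF(a))`; in particular `LM(a'/a) = θ^{(LF(a))}` and
`LC(a'/a) = LE(a)·LC(LF(a)'/LF(a))`. -/
theorem statement7 {Φ Γ : Type*} [LinearOrder Φ] [AddCommGroup Γ] [LinearOrder Γ] [IsOrderedAddMonoid Γ]
    (E : HahnEmb Φ Γ) (d : GSF Γ → GSF Γ)
    (hder : IsSeriesDerivation E d) (hhardy : IsHardy E d)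
    (a : GSF Γ) (ha : a ≠ 0) (hna : ¬ Kasymp a 1) :
    LTm (d a / a) = E.LE (LM a) • LTm (logD E d (E.LF (LM a))) ∧
    LM (d a / a) = theta E d (E.LF (LM a)) ∧
    LC (d a / a) = E.LE (LM a) * LC (logD E d (E.LF (LM a))) := by
  have hγ : LM a ≠ 0 := fun h => hna ((kasymp_one_iff ha).2 h)
  obtain ⟨hLM, hLC⟩ := hder.LM_LC_d hhardy ha hγ
  have hda : d a ≠ 0 := by
    rw [← HahnSeries.leadingCoeff_ne_zero, ← LC, hLC]
    exact mul_ne_zero (LC_ne_zero ha)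
      (mul_ne_zero (E.LF_mem _ hγ) (LC_ne_zero (hhardy.logD_ne_zero _)))
  have hLMq : LM (d a / a) = theta E d (E.LF (LM a)) := by
    rw [LM_div hda ha, hLM, add_sub_cancel_left]
  have hLCq : LC (d a / a) = E.LE (LM a) * LC (logD E d (E.LF (LM a))) := by
    rw [LC_div ha, hLC, mul_div_cancel_left₀ _ (LC_ne_zero ha)]
  exact ⟨by rw [LTm, LTm, hLMq, hLCq, smul_smul]; rfl, hLMq, hLCq⟩
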